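/- arXiv:1901.01399 — 3 statements merged into one kernel-verified Lean document; each statement's English description precedes it below -/
import Mathlib

section
/- Let γ>0 and let F₀ be an absolutely continuous distribution supported on [0,∞) belonging to the class ℒ(γ), with density f₀ satisfying b:=inf_{x≥0} f₀(x)/F̄₀(x) > 0. Let a be a constant with a>(1+b)/b, and define F by F(x)=0 for x<0 and F(x)=1−F̄₀(x)·(1+sin(x)/a) for x≥0. Then: (a) F is a (nondecreasing, right-continuous) distribution function with F̄ strictly decreasing on [0,∞); (b) F belongs to the generalized long-tailed class 𝒪ℒ but to no class ℒ(β) with β≥0; (c) C^*(F,0)=1; (d) for each pair λ₁>γ>λ₂>0, e^{λ₁x}·F̄(x)→∞ and e^{λ₂x}·F̄(x)→0 as x→∞. -/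
open MeasureTheory ProbabilityTheory Filter Topology Asymptotics Set

noncomputable section


lemma sin_lip (x y : ℝ) : |Real.sin x - Real.sin y| ≤ |x - y| := by
  rw [Real.sin_sub_sin, abs_mul, abs_mul]
  have h1 : |Real.sin ((x-y)/2)| ≤ |(x-y)/2| := Real.abs_sin_le_abs
  have h2 : |Real.cos ((x+y)/2)| ≤ 1 := Real.abs_cos_le_one _
  have h3 : |(x-y)/2| = |x-y|/2 := by rw [abs_div]; norm_num
  calc |(2:ℝ)| * |Real.sin ((x-y)/2)| * |Real.cos ((x+y)/2)|
      ≤ |(2:ℝ)| * |(x-y)/2| * 1 := by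
        apply mul_le_mul (by apply mul_le_mul_of_nonneg_left h1 (abs_nonneg _)) h2 (abs_nonneg _)
        positivity
    _ = |x - y| := by rw [h3, abs_two]; ring

/-- If a positive continuous function satisfies `g(x+1) ≥ r g(x)` with `r > 1`
for all large `x`, then `g → ∞`. -/
lemma tendsto_atTop_of_ratio (g : ℝ → ℝ) (hc : Continuous g) (hpos : ∀ x, 0 < g x)
    (r X : ℝ) (hr : 1 < r) (h : ∀ x ≥ X, r * g x ≤ g (x + 1)) :
    Tendsto g atTop atTop := by
  obtain ⟨z, hz, hmin⟩ := (isCompact_Icc (a := X) (b := X + 1)).exists_isMinOn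
    (nonempty_Icc.2 (by linarith)) (hc.continuousOn)
  set m := g z with hm
  have hm0 : 0 < m := hpos z
  have key : ∀ n : ℕ, ∀ x, X + n ≤ x → x ≤ X + n + 1 → r ^ n * m ≤ g x := by
    intro n
    induction n with
    | zero => intro x h1 h2; simpa using hmin ⟨by simpa using h1, by simpa using h2⟩
    | succ n ih =>
      intro x h1 h2
      have hx1 : X + n ≤ x - 1 := by push_cast at h1 ⊢; linarith
      have hx2 : x - 1 ≤ X + n + 1 := by push_cast at h2 ⊢; linarith
      have hX : X ≤ x - 1 := le_trans (le_add_of_nonneg_right (Nat.cast_nonneg n)) hx1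
      have := h (x - 1) hX
      have h3 := ih (x - 1) hx1 hx2
      have : r ^ (n + 1) * m = r * (r ^ n * m) := by ring
      rw [this]
      calc r * (r ^ n * m) ≤ r * g (x - 1) := by
            apply mul_le_mul_of_nonneg_left h3 (by linarith)
        _ ≤ g (x - 1 + 1) := h (x - 1) hX
        _ = g x := by ring_nf
  rw [tendsto_atTop]
  intro C
  have hpow : Tendsto (fun n : ℕ => r ^ n * m) atTop atTop :=
    (tendsto_pow_atTop_atTop_of_one_lt hr).atTop_mul_const hm0
  obtain ⟨N, hN⟩ := (tendsto_atTop.1 hpow C).exists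
  filter_upwards [eventually_ge_atTop (X + N)] with x hx
  have hXx : X ≤ x := le_trans (le_add_of_nonneg_right (Nat.cast_nonneg N)) hx
  set n := ⌊x - X⌋₊ with hn
  have hfl1 : (n : ℝ) ≤ x - X := Nat.floor_le (by linarith)
  have hfl2 : x - X < n + 1 := Nat.lt_floor_add_one _
  have hNn : N ≤ n := by
    have : (N : ℝ) ≤ x - X := by linarith
    exact_mod_cast Nat.le_floor this
  calc C ≤ r ^ N * m := hN
    _ ≤ r ^ n * m := by
        apply mul_le_mul_of_nonneg_right (pow_le_pow_right₀ (le_of_lt hr) hNn) (le_of_lt hm0)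
    _ ≤ g x := key n x (by linarith) (by linarith)

lemma tendsto_zero_of_ratio (g : ℝ → ℝ) (hc : Continuous g) (hpos : ∀ x, 0 < g x)
    (s X : ℝ) (hs0 : 0 < s) (hs : s < 1) (h : ∀ x ≥ X, g (x + 1) ≤ s * g x) :
    Tendsto g atTop (𝓝 0) := by
  have hinv : Tendsto (fun x => (g x)⁻¹) atTop atTop := by
    apply tendsto_atTop_of_ratio _ (hc.inv₀ (fun x => (hpos x).ne'))
      (fun x => inv_pos.2 (hpos x)) s⁻¹ X (one_lt_inv_iff₀.2 ⟨hs0, hs⟩)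
    intro x hx
    have h1 : (s * g x)⁻¹ ≤ (g (x+1))⁻¹ := by
      apply inv_anti₀ (hpos _) (h x hx)
    rw [mul_inv] at h1
    exact h1
  have h2 := hinv.inv_tendsto_atTop
  have h3 : (fun x => (g x)⁻¹)⁻¹ = g := by funext x; simp
  rwa [h3] at h2


/-- The tail `P(X > x)` of a random variable `X` (as a real number). -/
def rvTail {Ω : Type*} [MeasurableSpace Ω] (μ : Measure Ω) (X : Ω → ℝ) (x : ℝ) : ℝ :=
  (μ {ω | x < X ω}).toReal

/-- The tail `V̄(x) = V((x,∞))` of a distribution (probability measure) on `ℝ`. -/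
def mTail (V : Measure ℝ) (x : ℝ) : ℝ := (V (Ioi x)).toReal

/-- The long-tailed class `ℒ`, described via the tail function:
`T̄(x) > 0` for all `x` and `T(x - t) ∼ T(x)` for each `t > 0`. -/
def IsLongTail (T : ℝ → ℝ) : Prop :=
  (∀ x, 0 < T x) ∧ ∀ t > 0, Tendsto (fun x => T (x - t) / T x) atTop (𝓝 1)

/-- The exponential class `ℒ(γ)`, described via the tail function:
`T(x) > 0` for all `x` and `T(x - t) ∼ e^{γ t} T(x)` for each real `t`. -/
def IsLgamma (γ : ℝ) (T : ℝ → ℝ) : Prop :=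
  (∀ x, 0 < T x) ∧ ∀ t : ℝ, Tendsto (fun x => T (x - t) / T x) atTop (𝓝 (Real.exp (γ * t)))

/-- The generalized long-tailed class `𝒪ℒ`, described via the tail function:
`T(x) > 0` for all `x` and `limsup_{x→∞} T(x - t)/T(x) < ∞` for each `t > 0`. -/
def IsOL (T : ℝ → ℝ) : Prop :=
  (∀ x, 0 < T x) ∧ ∀ t > 0, IsBoundedUnder (· ≤ ·) atTop (fun x => T (x - t) / T x)

/-- `C^*(T, t) = limsup_{x→∞} T(x-t)/T(x)`. -/
def Cstar (T : ℝ → ℝ) (t : ℝ) : ℝ := Filter.limsup (fun x => T (x - t) / T x) atTop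

/-- `C_*(T, t) = liminf_{x→∞} T(x-t)/T(x)`. -/
def Cflat (T : ℝ → ℝ) (t : ℝ) : ℝ := Filter.liminf (fun x => T (x - t) / T x) atTop

set_option maxHeartbeats 2000000 in
/-- let `F₀ ∈ ℒ(γ)` (`γ > 0`) be absolutely continuous on `[0,∞)` with
density `f₀` and `b := inf_{x≥0} f₀(x)/F̄₀(x) > 0`, let `a > (1+b)/b`, and define `F` by
`F̄(x) = F̄₀(x)(1 + sin(x)/a)` for `x ≥ 0`. Then (a) `F` is a distribution function whose
tail is strictly decreasing on `[0,∞)`; (b) `F ∈ 𝒪ℒ` but `F ∉ ℒ(β)` for all `β ≥ 0`;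
(c) `C^*(F,0) = 1`; (d) `e^{λ₁x} F̄(x) → ∞` and `e^{λ₂x} F̄(x) → 0` whenever
`λ₁ > γ > λ₂ > 0`. -/
theorem stmt_17 (γ : ℝ) (hγ : 0 < γ) (f₀ : ℝ → ℝ) (T₀ : ℝ → ℝ)
    (hf₀nn : ∀ y, 0 ≤ f₀ y) (hf₀neg : ∀ y < (0:ℝ), f₀ y = 0)
    (hf₀int : Integrable f₀) (hmass : ∫ y, f₀ y = 1)
    (hT₀ : ∀ x, T₀ x = ∫ y in Ioi x, f₀ y)
    (hLγ : IsLgamma γ T₀)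
    (b : ℝ) (hb : 0 < b) (hbdef : b = sInf ((fun x => f₀ x / T₀ x) '' Ici 0))
    (a : ℝ) (ha : (1 + b) / b < a)
    (T : ℝ → ℝ)
    (hTneg : ∀ x < (0:ℝ), T x = 1)
    (hTpos : ∀ x ≥ (0:ℝ), T x = T₀ x * (1 + Real.sin x / a)) :
    (Antitone T ∧ StrictAntiOn T (Ici 0) ∧ ContinuousOn T (Ici 0) ∧
      Tendsto T atTop (𝓝 0)) ∧
    (IsOL T ∧ ∀ β ≥ (0:ℝ), ¬ IsLgamma β T) ∧
    Tendsto (fun t => Cstar T t) (𝓝[>] (0:ℝ)) (𝓝 1) ∧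
    (∀ l₁ l₂ : ℝ, γ < l₁ → 0 < l₂ → l₂ < γ →
      Tendsto (fun x => Real.exp (l₁ * x) * T x) atTop atTop ∧
      Tendsto (fun x => Real.exp (l₂ * x) * T x) atTop (𝓝 0)) := by
  obtain ⟨hT₀pos, hT₀lim⟩ := hLγ
  have ha1 : 1 < a := by
    have h1 : (1:ℝ) < (1+b)/b := by rw [lt_div_iff₀ hb]; linarith
    linarith
  have ha0 : 0 < a := by linarith
  have hab : 1 + b < a * b := by
    have := (div_lt_iff₀ hb).1 ha; linarith
  have hfrac_pos : 0 < 1 - 1/a := by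
    rw [sub_pos, div_lt_one ha0]; exact ha1
  have hsin_lb : ∀ x : ℝ, 1 - 1/a ≤ 1 + Real.sin x / a := by
    intro x
    have e2 : (-1:ℝ)/a ≤ Real.sin x / a :=
      div_le_div_of_nonneg_right (Real.neg_one_le_sin x) ha0.le
    have e3 : (-1:ℝ)/a = -(1/a) := by ring
    linarith
  have hsin_ub : ∀ x : ℝ, 1 + Real.sin x / a ≤ 1 + 1/a := by
    intro x
    have e2 : Real.sin x / a ≤ 1/a :=
      div_le_div_of_nonneg_right (Real.sin_le_one x) ha0.le
    linarith
  have hTpos' : ∀ x, 0 < T x := by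
    intro x
    rcases lt_or_ge x 0 with h | h
    · rw [hTneg x h]; norm_num
    · rw [hTpos x h]
      exact mul_pos (hT₀pos x) (lt_of_lt_of_le hfrac_pos (hsin_lb x))
  have hT₀anti : Antitone T₀ := by
    intro x y hxy
    rw [hT₀ x, hT₀ y]
    exact setIntegral_mono_set hf₀int.integrableOn (Eventually.of_forall hf₀nn)
      (HasSubset.Subset.eventuallyLE (Ioi_subset_Ioi hxy))
  have hdiff : ∀ u v : ℝ, u ≤ v → T₀ u - T₀ v = ∫ t in Set.Ioc u v, f₀ t := by
    intro u v huv
    rw [hT₀ u, hT₀ v]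
    have hsplit : ∫ t in Ioi u, f₀ t = (∫ t in Set.Ioc u v, f₀ t) + ∫ t in Ioi v, f₀ t := by
      rw [← Ioc_union_Ioi_eq_Ioi huv]
      exact setIntegral_union (s := Set.Ioc u v) (t := Set.Ioi v)
        (Ioc_disjoint_Ioi le_rfl) measurableSet_Ioi
        hf₀int.integrableOn hf₀int.integrableOn
    linarith
  have hrepr : ∀ x : ℝ, T₀ x = T₀ 0 - ∫ t in (0:ℝ)..x, f₀ t := by
    intro x
    rcases le_total 0 x with h | h
    · rw [intervalIntegral.integral_of_le h]
      have := hdiff 0 x h; linarith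
    · rw [intervalIntegral.integral_of_ge h]
      have := hdiff x 0 h; linarith
  have heqT₀ : T₀ = fun x => T₀ 0 - ∫ t in (0:ℝ)..x, f₀ t := funext hrepr
  have hT₀cont : Continuous T₀ := by
    rw [heqT₀]
    exact continuous_const.sub
      (intervalIntegral.continuous_primitive (fun _ _ => hf₀int.intervalIntegrable) 0)
  have hT₀top : Tendsto T₀ atTop (𝓝 0) := by
    have h1 : Tendsto (fun x : ℝ => ∫ t in (0:ℝ)..x, f₀ t) atTop
        (𝓝 (∫ t in Ioi (0:ℝ), f₀ t)) :=
      intervalIntegral_tendsto_integral_Ioi 0 hf₀int.integrableOn tendsto_id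
    have h2 : Tendsto (fun x : ℝ => T₀ 0 - ∫ t in (0:ℝ)..x, f₀ t) atTop
        (𝓝 (T₀ 0 - ∫ t in Ioi (0:ℝ), f₀ t)) := tendsto_const_nhds.sub h1
    have h3 : T₀ 0 - ∫ t in Ioi (0:ℝ), f₀ t = 0 := by rw [hT₀ 0]; ring
    rw [heqT₀]
    rwa [h3] at h2
  have hb_le : ∀ x : ℝ, 0 ≤ x → b * T₀ x ≤ f₀ x := by
    intro x hx
    have hmem : f₀ x / T₀ x ∈ (fun x => f₀ x / T₀ x) '' Ici 0 := ⟨x, hx, rfl⟩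
    have hbdd : BddBelow ((fun x => f₀ x / T₀ x) '' Ici 0) := by
      refine ⟨0, ?_⟩
      rintro _ ⟨y, -, rfl⟩
      exact div_nonneg (hf₀nn y) (hT₀pos y).le
    have hle : b ≤ f₀ x / T₀ x := hbdef ▸ csInf_le hbdd hmem
    exact (le_div_iff₀ (hT₀pos x)).1 hle
  have hgap : ∀ x y : ℝ, 0 ≤ x → x ≤ y → b * T₀ y * (y - x) ≤ T₀ x - T₀ y := by
    intro x y hx hxy
    rw [hdiff x y hxy]
    have hle : ∫ _t in Set.Ioc x y, (b * T₀ y) ≤ ∫ t in Set.Ioc x y, f₀ t := by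
      apply setIntegral_mono_on (integrableOn_const measure_Ioc_lt_top.ne)
        hf₀int.integrableOn measurableSet_Ioc
      intro t ht
      calc b * T₀ y ≤ b * T₀ t := mul_le_mul_of_nonneg_left (hT₀anti ht.2) hb.le
        _ ≤ f₀ t := hb_le t (le_trans hx ht.1.le)
    rw [setIntegral_const, measureReal_def, Real.volume_Ioc, ENNReal.toReal_ofReal (by linarith),
      smul_eq_mul] at hle
    linarith
  have hstrict : StrictAntiOn T (Ici 0) := by
    intro x hx y hy hxy
    simp only [mem_Ici] at hx hy
    rw [hTpos x hx, hTpos y hy]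
    have h1 := hgap x y hx hxy.le
    have habs : |Real.sin x - Real.sin y| ≤ y - x := by
      have h := sin_lip x y
      rwa [abs_of_nonpos (by linarith : x - y ≤ 0), neg_sub] at h
    obtain ⟨h2a, h2b⟩ := abs_le.1 habs
    have hs1 := Real.neg_one_le_sin x
    have hs2 := Real.sin_le_one x
    have hs3 := Real.neg_one_le_sin y
    have hs4 := Real.sin_le_one y
    have hT0y := hT₀pos y
    have hT0x := hT₀pos x
    have hDpos : 0 ≤ T₀ x - T₀ y :=
      le_trans (mul_pos (mul_pos hb hT0y) (sub_pos.2 hxy)).le h1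
    have p1 : 0 ≤ (T₀ x - T₀ y) * (1 + Real.sin x) := mul_nonneg hDpos (by linarith)
    have p2 : 0 ≤ T₀ y * ((Real.sin x - Real.sin y) + (y - x)) :=
      mul_nonneg hT0y.le (by linarith)
    have p3 : 0 < (a * b - 1 - b) * (T₀ y * (y - x)) :=
      mul_pos (by linarith) (mul_pos hT0y (by linarith))
    have p4 : 0 ≤ (a - 1) * ((T₀ x - T₀ y) - b * T₀ y * (y - x)) :=
      mul_nonneg (by linarith) (by linarith)
    have key : T₀ y * (a + Real.sin y) < T₀ x * (a + Real.sin x) := by nlinarith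
    have e1 : T₀ y * (1 + Real.sin y / a) = T₀ y * (a + Real.sin y) / a := by
      field_simp
    have e2 : T₀ x * (1 + Real.sin x / a) = T₀ x * (a + Real.sin x) / a := by
      field_simp
    rw [e1, e2]
    exact (div_lt_div_iff_of_pos_right ha0).2 key
  have hT₀0 : T₀ 0 = 1 := by
    have hzero : ∫ y in Iic (0:ℝ), f₀ y = 0 := by
      rw [integral_Iic_eq_integral_Iio]
      rw [setIntegral_congr_fun measurableSet_Iio (fun y hy => hf₀neg y hy)]
      simp
    have hsplit := integral_add_compl (s := Ioi (0:ℝ)) measurableSet_Ioi hf₀int (f := f₀)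
    rw [compl_Ioi, hzero, hmass] at hsplit
    rw [hT₀ 0]
    linarith
  have hT00 : T 0 = 1 := by
    rw [hTpos 0 le_rfl, Real.sin_zero, hT₀0]
    norm_num
  have hTle1 : ∀ y : ℝ, 0 ≤ y → T y ≤ 1 := by
    intro y hy
    rcases eq_or_lt_of_le hy with h0 | h0
    · rw [← h0, hT00]
    · rw [← hT00]
      exact (hstrict self_mem_Ici hy h0).le
  have hanti : Antitone T := by
    intro x y hxy
    rcases lt_or_ge y 0 with hy | hy
    · rw [hTneg x (lt_of_le_of_lt hxy hy), hTneg y hy]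
    rcases lt_or_ge x 0 with hx | hx
    · rw [hTneg x hx]; exact hTle1 y hy
    rcases eq_or_lt_of_le hxy with h0 | h0
    · rw [h0]
    · exact (hstrict hx (le_trans hx hxy) h0).le
  have hTcont : ContinuousOn T (Ici 0) := by
    have hc : Continuous fun x => T₀ x * (1 + Real.sin x / a) :=
      hT₀cont.mul (continuous_const.add (Real.continuous_sin.div_const a))
    exact hc.continuousOn.congr (fun x hx => hTpos x hx)
  have hT2T₀ : ∀ x : ℝ, 0 ≤ x → T x ≤ 2 * T₀ x := by
    intro x hx
    rw [hTpos x hx]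
    have h2 : 1/a ≤ 1 := by rw [div_le_one ha0]; linarith
    have h1 : 1 + Real.sin x / a ≤ 2 := by
      have := hsin_ub x
      linarith
    nlinarith [(hT₀pos x).le]
  have hTtop : Tendsto T atTop (𝓝 0) := by
    have h2 : Tendsto (fun x => 2 * T₀ x) atTop (𝓝 (2 * 0)) := hT₀top.const_mul 2
    rw [mul_zero] at h2
    apply tendsto_of_tendsto_of_tendsto_of_le_of_le' tendsto_const_nhds h2
    · exact Eventually.of_forall fun x => (hTpos' x).le
    · filter_upwards [eventually_ge_atTop (0:ℝ)] with x hx using hT2T₀ x hx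
  have hub : ∀ t : ℝ, 0 < t → ∀ᶠ x in atTop,
      T (x - t) / T x ≤ (Real.exp (γ * t) + t) * (1 + t / (a - 1)) := by
    intro t ht
    have h1 : ∀ᶠ x in atTop, T₀ (x - t) / T₀ x ≤ Real.exp (γ * t) + t :=
      (hT₀lim t).eventually_le_const (lt_add_of_pos_right _ ht)
    filter_upwards [h1, eventually_ge_atTop t] with x hx1 hx2
    have hx0 : (0:ℝ) ≤ x := le_trans ht.le hx2
    have hxt : (0:ℝ) ≤ x - t := by linarith
    rw [hTpos x hx0, hTpos _ hxt]
    have hd1 : 0 < 1 + Real.sin x / a := lt_of_lt_of_le hfrac_pos (hsin_lb x)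
    have hd2 : 0 < 1 + Real.sin (x - t) / a := lt_of_lt_of_le hfrac_pos (hsin_lb (x - t))
    have hs : Real.sin (x - t) ≤ Real.sin x + t := by
      have h := abs_le.1 (sin_lip (x - t) x)
      have habs : |x - t - x| = t := by
        rw [show x - t - x = -t by ring, abs_neg, abs_of_pos ht]
      rw [habs] at h
      linarith [h.2]
    have ha1' : (0:ℝ) < a - 1 := by linarith
    have step1' : (a - 1) * (a + Real.sin (x - t)) ≤ (a - 1 + t) * (a + Real.sin x) := by
      nlinarith [mul_le_mul_of_nonneg_left hs ha1'.le,
        mul_nonneg ht.le (by linarith [Real.neg_one_le_sin x] : (0:ℝ) ≤ 1 + Real.sin x)]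
    have hstep : 1 + Real.sin (x - t) / a ≤ (1 + t / (a - 1)) * (1 + Real.sin x / a) := by
      have e1 : 1 + Real.sin (x - t) / a = (a + Real.sin (x - t)) / a := by field_simp
      have e2 : (1 + t / (a - 1)) * (1 + Real.sin x / a)
          = ((a - 1 + t) * (a + Real.sin x)) / ((a - 1) * a) := by
        field_simp <;> ring
      rw [e1, e2, div_le_div_iff₀ ha0 (by positivity)]
      nlinarith [mul_le_mul_of_nonneg_right step1' ha0.le]
    have hr : T₀ (x - t) ≤ (Real.exp (γ * t) + t) * T₀ x := by
      rw [div_le_iff₀ (hT₀pos x)] at hx1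
      linarith
    rw [div_le_iff₀ (mul_pos (hT₀pos x) hd1)]
    calc T₀ (x - t) * (1 + Real.sin (x - t) / a)
        ≤ ((Real.exp (γ * t) + t) * T₀ x) * ((1 + t / (a - 1)) * (1 + Real.sin x / a)) := by
          apply mul_le_mul hr hstep hd2.le
          exact mul_nonneg (by positivity) (hT₀pos x).le
      _ = (Real.exp (γ * t) + t) * (1 + t / (a - 1)) * (T₀ x * (1 + Real.sin x / a)) := by
          ring
  have hlb : ∀ t : ℝ, 0 ≤ t → ∀ x : ℝ, 1 ≤ T (x - t) / T x := by
    intro t ht x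
    rw [le_div_iff₀ (hTpos' x), one_mul]
    exact hanti (by linarith)
  have hOL : IsOL T := by
    refine ⟨hTpos', fun t ht => ?_⟩
    exact ⟨(Real.exp (γ * t) + t) * (1 + t / (a - 1)), eventually_map.2 (hub t ht)⟩
  have hNotL : ∀ β : ℝ, 0 ≤ β → ¬ IsLgamma β T := by
    rintro β hβ ⟨-, hlim⟩
    have hπ : (0:ℝ) < Real.pi := Real.pi_pos
    have h2π : Tendsto (fun x => T (x - 2 * Real.pi) / T x) atTop
        (𝓝 (Real.exp (γ * (2 * Real.pi)))) := by
      apply (hT₀lim (2 * Real.pi)).congr'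
      filter_upwards [eventually_ge_atTop (2 * Real.pi)] with x hx
      have hx0 : (0:ℝ) ≤ x := le_trans (by linarith) hx
      have hxt : (0:ℝ) ≤ x - 2 * Real.pi := by linarith
      have hne : (1 + Real.sin x / a) ≠ 0 := (lt_of_lt_of_le hfrac_pos (hsin_lb x)).ne'
      rw [hTpos x hx0, hTpos _ hxt, Real.sin_sub_two_pi, mul_div_mul_right _ _ hne]
    have hβγ : β = γ := by
      have huniq := tendsto_nhds_unique (hlim (2 * Real.pi)) h2π
      have h2 : β * (2 * Real.pi) = γ * (2 * Real.pi) := Real.exp_eq_exp.1 huniq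
      have h2π0 : (2 * Real.pi) ≠ 0 := by positivity
      exact mul_right_cancel₀ h2π0 h2
    subst hβγ
    set xseq : ℕ → ℝ := fun n => Real.pi / 2 + n * (2 * Real.pi) with hxs
    have hxtop : Tendsto xseq atTop atTop := by
      apply tendsto_atTop_add_const_left
      exact tendsto_natCast_atTop_atTop.atTop_mul_const (by positivity)
    have hA : Tendsto (fun n => T (xseq n - Real.pi) / T (xseq n)) atTop
        (𝓝 (Real.exp (β * Real.pi))) := (hlim Real.pi).comp hxtop
    have hB : Tendsto (fun n => T₀ (xseq n - Real.pi) / T₀ (xseq n)) atTop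
        (𝓝 (Real.exp (β * Real.pi))) := (hT₀lim Real.pi).comp hxtop
    have hd3 : (0:ℝ) < 1 + 1/a := by positivity
    have hC : Tendsto (fun n => T (xseq n - Real.pi) / T (xseq n)) atTop
        (𝓝 (Real.exp (β * Real.pi) * ((1 - 1/a) / (1 + 1/a)))) := by
      apply (hB.mul_const ((1 - 1/a) / (1 + 1/a))).congr'
      filter_upwards [eventually_ge_atTop 1] with n hn
      have hn1 : (1:ℝ) ≤ (n:ℝ) := by exact_mod_cast hn
      have hsin1 : Real.sin (xseq n) = 1 := by
        show Real.sin (Real.pi / 2 + n * (2 * Real.pi)) = 1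
        rw [Real.sin_add_nat_mul_two_pi, Real.sin_pi_div_two]
      have hsin2 : Real.sin (xseq n - Real.pi) = -1 := by
        rw [Real.sin_sub_pi, hsin1]
      have hxeq : xseq n = Real.pi / 2 + n * (2 * Real.pi) := rfl
      have h6 : (2*Real.pi) * 1 ≤ (2*Real.pi) * n :=
        mul_le_mul_of_nonneg_left hn1 (by positivity)
      have hx0 : (0:ℝ) ≤ xseq n := by
        rw [hxeq]; linarith
      have hxt0 : (0:ℝ) ≤ xseq n - Real.pi := by
        rw [hxeq]; linarith
      rw [hTpos _ hx0, hTpos _ hxt0, hsin1, hsin2]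
      rw [show (1 + (-1:ℝ)/a) = 1 - 1/a by ring, mul_div_mul_comm]
    have huniq := tendsto_nhds_unique hA hC
    have hlt : (1 - 1/a) / (1 + 1/a) < 1 := by
      rw [div_lt_one hd3]
      have h4 : (0:ℝ) < 1/a := by positivity
      linarith
    nlinarith [Real.exp_pos (β * Real.pi), mul_lt_mul_of_pos_left hlt
      (Real.exp_pos (β * Real.pi))]
  have hCstar : Tendsto (fun t => Cstar T t) (𝓝[>] (0:ℝ)) (𝓝 1) := by
    have hupper : ∀ t ∈ Ioi (0:ℝ), Cstar T t ≤ (Real.exp (γ * t) + t) * (1 + t / (a - 1)) := by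
      intro t ht
      exact Filter.limsup_le_of_le
        (isCoboundedUnder_le_of_eventually_le atTop
          (Eventually.of_forall (fun x => hlb t (le_of_lt ht) x)))
        (hub t ht)
    have hlower : ∀ t ∈ Ioi (0:ℝ), 1 ≤ Cstar T t := by
      intro t ht
      have hbd : IsBoundedUnder (· ≤ ·) atTop (fun x => T (x - t) / T x) :=
        ⟨(Real.exp (γ * t) + t) * (1 + t / (a - 1)), eventually_map.2 (hub t ht)⟩
      exact le_limsup_of_frequently_le
        (Eventually.frequently (Eventually.of_forall (fun x => hlb t (le_of_lt ht) x)))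
        hbd
    have hBlim : Tendsto (fun t => (Real.exp (γ * t) + t) * (1 + t / (a - 1)))
        (𝓝[>] (0:ℝ)) (𝓝 1) := by
      have hc : Continuous (fun t => (Real.exp (γ * t) + t) * (1 + t / (a - 1))) :=
        ((Real.continuous_exp.comp (continuous_const.mul continuous_id)).add
          continuous_id).mul (continuous_const.add (continuous_id.div_const _))
      have h5 := (hc.tendsto 0).mono_left (nhdsWithin_le_nhds (s := Ioi (0:ℝ)))
      simpa using h5
    apply tendsto_of_tendsto_of_tendsto_of_le_of_le' tendsto_const_nhds hBlim
    · exact eventually_nhdsWithin_of_forall hlower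
    · exact eventually_nhdsWithin_of_forall hupper
  refine ⟨⟨hanti, hstrict, hTcont, hTtop⟩, ⟨hOL, fun β hβ => hNotL β hβ⟩, hCstar, ?_⟩
  intro l₁ l₂ hl₁ hl₂0 hl₂
  have hratio : Tendsto (fun x => T₀ (x + 1) / T₀ x) atTop (𝓝 (Real.exp (-γ))) := by
    have h := hT₀lim (-1)
    simpa only [sub_neg_eq_add, mul_neg_one] using h
  constructor
  · set g := fun x => Real.exp (l₁ * x) * T₀ x with hg
    have hgc : Continuous g :=
      (Real.continuous_exp.comp (continuous_const.mul continuous_id)).mul hT₀cont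
    have hgpos : ∀ x, 0 < g x := fun x => mul_pos (Real.exp_pos _) (hT₀pos x)
    have hr2 : Tendsto (fun x => Real.exp l₁ * (T₀ (x + 1) / T₀ x)) atTop
        (𝓝 (Real.exp (l₁ - γ))) := by
      have h := hratio.const_mul (Real.exp l₁)
      rwa [← Real.exp_add, show l₁ + -γ = l₁ - γ by ring] at h
    have hc1 : 1 < Real.exp (l₁ - γ) := by
      rw [show (1:ℝ) = Real.exp 0 from Real.exp_zero.symm]
      exact Real.exp_lt_exp.2 (by linarith)
    set r := (1 + Real.exp (l₁ - γ)) / 2 with hrdef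
    have hr1 : 1 < r := by rw [hrdef]; linarith
    have hrc : r < Real.exp (l₁ - γ) := by rw [hrdef]; linarith
    obtain ⟨X, hX⟩ := eventually_atTop.1 (hr2.eventually_const_le hrc)
    have htop : Tendsto g atTop atTop := by
      apply tendsto_atTop_of_ratio g hgc hgpos r X hr1
      intro x hx
      have h := hX x hx
      rw [mul_div_assoc'] at h
      have key : r * T₀ x ≤ Real.exp l₁ * T₀ (x + 1) := (le_div_iff₀ (hT₀pos x)).1 h
      calc r * g x = Real.exp (l₁ * x) * (r * T₀ x) := by rw [hg]; ring
        _ ≤ Real.exp (l₁ * x) * (Real.exp l₁ * T₀ (x + 1)) :=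
            mul_le_mul_of_nonneg_left key (Real.exp_pos _).le
        _ = g (x + 1) := by
            rw [hg]
            simp only
            rw [show l₁ * (x + 1) = l₁ * x + l₁ by ring, Real.exp_add]
            ring
    have hmono : ∀ᶠ x in atTop, (1 - 1/a) * g x ≤ Real.exp (l₁ * x) * T x := by
      filter_upwards [eventually_ge_atTop (0:ℝ)] with x hx
      rw [hTpos x hx]
      have h1 : T₀ x * (1 - 1/a) ≤ T₀ x * (1 + Real.sin x / a) :=
        mul_le_mul_of_nonneg_left (hsin_lb x) (hT₀pos x).le
      calc (1 - 1/a) * g x = Real.exp (l₁ * x) * (T₀ x * (1 - 1/a)) := by rw [hg]; ring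
        _ ≤ Real.exp (l₁ * x) * (T₀ x * (1 + Real.sin x / a)) :=
            mul_le_mul_of_nonneg_left h1 (Real.exp_pos _).le
    exact tendsto_atTop_mono' atTop hmono (htop.const_mul_atTop hfrac_pos)
  · set g := fun x => Real.exp (l₂ * x) * T₀ x with hg
    have hgc : Continuous g :=
      (Real.continuous_exp.comp (continuous_const.mul continuous_id)).mul hT₀cont
    have hgpos : ∀ x, 0 < g x := fun x => mul_pos (Real.exp_pos _) (hT₀pos x)
    have hr2 : Tendsto (fun x => Real.exp l₂ * (T₀ (x + 1) / T₀ x)) atTop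
        (𝓝 (Real.exp (l₂ - γ))) := by
      have h := hratio.const_mul (Real.exp l₂)
      rwa [← Real.exp_add, show l₂ + -γ = l₂ - γ by ring] at h
    have hc1 : Real.exp (l₂ - γ) < 1 := by
      rw [show (1:ℝ) = Real.exp 0 from Real.exp_zero.symm]
      exact Real.exp_lt_exp.2 (by linarith)
    set s := (Real.exp (l₂ - γ) + 1) / 2 with hsdef
    have hs0 : 0 < s := by
      have := Real.exp_pos (l₂ - γ); rw [hsdef]; linarith
    have hs1 : s < 1 := by rw [hsdef]; linarith
    have hcs : Real.exp (l₂ - γ) < s := by rw [hsdef]; linarith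
    obtain ⟨X, hX⟩ := eventually_atTop.1 (hr2.eventually_le_const hcs)
    have hzero : Tendsto g atTop (𝓝 0) := by
      apply tendsto_zero_of_ratio g hgc hgpos s X hs0 hs1
      intro x hx
      have h := hX x hx
      rw [mul_div_assoc'] at h
      have key : Real.exp l₂ * T₀ (x + 1) ≤ s * T₀ x := (div_le_iff₀ (hT₀pos x)).1 h
      calc g (x + 1) = Real.exp (l₂ * x) * (Real.exp l₂ * T₀ (x + 1)) := by
            rw [hg]
            simp only
            rw [show l₂ * (x + 1) = l₂ * x + l₂ by ring, Real.exp_add]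
            ring
        _ ≤ Real.exp (l₂ * x) * (s * T₀ x) :=
            mul_le_mul_of_nonneg_left key (Real.exp_pos _).le
        _ = s * g x := by rw [hg]; ring
    have h2 : Tendsto (fun x => 2 * g x) atTop (𝓝 (2 * 0)) := hzero.const_mul 2
    rw [mul_zero] at h2
    apply tendsto_of_tendsto_of_tendsto_of_le_of_le' tendsto_const_nhds h2
    · exact Eventually.of_forall fun x => mul_nonneg (Real.exp_pos _).le (hTpos' x).le
    · filter_upwards [eventually_ge_atTop (0:ℝ)] with x hx
      have h6 := hT2T₀ x hx
      calc Real.exp (l₂ * x) * T x ≤ Real.exp (l₂ * x) * (2 * T₀ x) :=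
            mul_le_mul_of_nonneg_left h6 (Real.exp_pos _).le
        _ = 2 * g x := by rw [hg]; ring
end
end

section
/- Let θ∈(3/2,(√5+1)/2), r=(θ+1)/θ, and let a>1 satisfy a^r>8a. Set aₙ=a^{rⁿ} for integers n≥0 and C=(Σ_{i=0}^∞ aᵢ^{−θ})^{−1}. Define the distribution F₀ supported on [a₀,∞) by F̄₀(x)=1 for x<a₀ and, for each n≥0, F̄₀(x)=C·(Σ_{i=n}^∞ aᵢ^{−θ} − aₙ^{−θ−1}(x−aₙ)) for x∈[aₙ,2aₙ) and F̄₀(x)=C·Σ_{i=n+1}^∞ aᵢ^{−θ} for x∈[2aₙ,a_{n+1}). Then C^*(F₀,t)=1+t for each t>0; consequently C^*(F₀,0)=1, F₀ belongs to the generalized long-tailed class 𝒪ℒ, and F₀ does not belong to the long-tailed class ℒ. -/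
open MeasureTheory ProbabilityTheory Filter Topology Asymptotics Set

set_option maxHeartbeats 1000000
noncomputable section

lemma stmt18_aux1 (t s S1 v : ℝ) (ht : 0 < t) (hv : v ≤ t) (hs : 0 ≤ s)
    (h1t : (1+t)*s ≤ S1) : S1 ≤ (1+t)*(S1 - s*v) := by
  nlinarith [mul_le_mul_of_nonneg_left hv (mul_nonneg (by linarith : (0:ℝ) ≤ 1+t) hs),
    mul_le_mul_of_nonneg_right h1t ht.le]

lemma stmt18_aux2 (t s Sn Sn1 Aθ An v : ℝ) (h1 : An - t ≤ v) (hs : 0 ≤ s) (ht : 0 ≤ t)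
    (hAn : s * An = Aθ) (hrec : Sn = Aθ + Sn1) (hsS : s ≤ Sn1) :
    Sn - s * v ≤ (1+t) * Sn1 := by
  nlinarith [mul_le_mul_of_nonneg_left h1 hs, mul_le_mul_of_nonneg_right hsS ht]

/-- for the piecewise-linear distribution `F₀` with tail built from
`aₙ = a^{rⁿ}` (with `θ ∈ (3/2, (√5+1)/2)`, `r = (θ+1)/θ`, `a > 1`, `a^r > 8a`),
one has `C^*(F₀, t) = 1 + t` for each `t > 0`; consequently `C^*(F₀,0) = 1`,
`F₀ ∈ 𝒪ℒ`, and `F₀ ∉ ℒ`. -/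
theorem stmt_18 (θ r a : ℝ)
    (hθ₁ : 3 / 2 < θ) (hθ₂ : θ < (Real.sqrt 5 + 1) / 2)
    (hr : r = (θ + 1) / θ) (ha : 1 < a) (har : a ^ r > 8 * a)
    (A : ℕ → ℝ) (hA : ∀ n, A n = a ^ (r ^ n))
    (S : ℕ → ℝ) (hS : ∀ n, S n = ∑' i : ℕ, A (n + i) ^ (-θ))
    (C : ℝ) (hC : C = (∑' i : ℕ, A i ^ (-θ))⁻¹)
    (T : ℝ → ℝ)
    (hT1 : ∀ x, x < A 0 → T x = 1)
    (hT2 : ∀ n : ℕ, ∀ x, A n ≤ x → x < 2 * A n →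
      T x = C * (S n - A n ^ (-θ - 1) * (x - A n)))
    (hT3 : ∀ n : ℕ, ∀ x, 2 * A n ≤ x → x < A (n + 1) → T x = C * S (n + 1)) :
    (∀ t > (0:ℝ), Cstar T t = 1 + t) ∧
    Tendsto (fun t => Cstar T t) (𝓝[>] (0:ℝ)) (𝓝 1) ∧
    IsOL T ∧ ¬ IsLongTail T := by
  have hθ0 : (0:ℝ) < θ := by linarith
  have ha0 : (0:ℝ) < a := by linarith
  have hr1 : 1 < r := by rw [hr, lt_div_iff₀ hθ0]; linarith
  have hr0 : 0 < r := by linarith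
  have hrθ : r * θ = θ + 1 := by rw [hr]; field_simp
  have hApos : ∀ n, 0 < A n := fun n => by rw [hA]; positivity
  have hA1 : ∀ n, 1 < A n := fun n => by
    rw [hA]; exact Real.one_lt_rpow_iff_of_pos ha0 |>.2 (Or.inl ⟨ha, pow_pos hr0 n⟩)
  have hAsucc : ∀ n, A (n+1) = A n ^ r := fun n => by
    rw [hA, hA, pow_succ, Real.rpow_mul ha0.le]
  have hkey : ∀ n, A n ^ (-θ - 1) = A (n+1) ^ (-θ) := fun n => by
    rw [hAsucc, ← Real.rpow_mul (hApos n).le]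
    congr 1
    linear_combination hrθ
  -- a^(r-1) > 8
  have ham : (8:ℝ) < a ^ (r - 1) := by
    rw [Real.rpow_sub ha0, Real.rpow_one, lt_div_iff₀ ha0]
    linarith [har]
  have h8 : ∀ n, 8 * A n < A (n + 1) := fun n => by
    have h1 : A (n+1) = A n ^ (r - 1) * A n := by
      rw [hAsucc, ← Real.rpow_add_one (hApos n).ne', sub_add_cancel]
    have hAa : a ≤ A n := by
      rw [hA]
      nth_rewrite 1 [← Real.rpow_one a]
      exact (Real.rpow_le_rpow_left_iff ha).2 (one_le_pow₀ hr1.le)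
    have h2 : (8:ℝ) < A n ^ (r - 1) :=
      ham.trans_le (Real.rpow_le_rpow ha0.le hAa (by linarith))
    rw [h1]
    nlinarith [hApos n]
  have hgeo : ∀ n, (8:ℝ) ^ n ≤ A n := by
    intro n; induction n with
    | zero => simpa [hA] using ha.le
    | succ k ih =>
      calc (8:ℝ)^(k+1) = 8 * 8^k := by ring
        _ ≤ 8 * A k := by nlinarith
        _ ≤ A (k+1) := (h8 k).le
  have hAtop : Tendsto A atTop atTop :=
    tendsto_atTop_mono hgeo (tendsto_pow_atTop_atTop_of_one_lt (by norm_num))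
  have hAmono : StrictMono A := strictMono_nat_of_lt_succ (fun n => by nlinarith [h8 n, hApos n])
  have hratio : ∀ n, A (n+1) ^ (-θ) ≤ (8:ℝ)⁻¹ * A n ^ (-θ) := by
    intro n
    have h1 : A (n+1) ^ (-θ) ≤ (8 * A n) ^ (-θ) := by
      apply Real.rpow_le_rpow_of_nonpos (by linarith [hApos n]) (h8 n).le (by linarith)
    have h2 : ((8:ℝ) * A n) ^ (-θ) = (8:ℝ)^(-θ) * A n ^ (-θ) :=
      Real.mul_rpow (by norm_num) (hApos n).le
    have h3 : (8:ℝ)^(-θ) ≤ (8:ℝ)⁻¹ := by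
      rw [← Real.rpow_neg_one 8]
      exact Real.rpow_le_rpow_of_exponent_le (by norm_num) (by linarith)
    have h4 : (0:ℝ) ≤ A n ^ (-θ) := Real.rpow_nonneg (hApos n).le _
    nlinarith [h1, h2]
  have hsum : Summable (fun i => A i ^ (-θ)) := by
    apply summable_of_ratio_norm_eventually_le (r := (8:ℝ)⁻¹) (by norm_num)
    filter_upwards with n
    rw [Real.norm_of_nonneg (Real.rpow_nonneg (hApos _).le _),
        Real.norm_of_nonneg (Real.rpow_nonneg (hApos _).le _)]
    exact hratio n
  have hsum' : ∀ n, Summable (fun i => A (n + i) ^ (-θ)) := fun n => by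
    simpa [add_comm n] using (summable_nat_add_iff n).2 hsum
  have hSrec : ∀ n, S n = A n ^ (-θ) + S (n+1) := by
    intro n
    rw [hS, hS, Summable.tsum_eq_zero_add (hsum' n), add_zero]
    congr 1
    exact tsum_congr fun i => by rw [show n+(i+1) = (n+1)+i from by omega]
  have hSpos : ∀ n, 0 < S n := by
    intro n
    rw [hS]
    exact Summable.tsum_pos (hsum' n) (fun i => Real.rpow_nonneg (hApos _).le _) 0
      (Real.rpow_pos_of_pos (hApos _) _)
  have hSge : ∀ n, A n ^ (-θ) ≤ S n := fun n => by
    have := hSrec n; have := hSpos (n+1); linarith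
  have hgeo2 : ∀ n k, A (n+k) ^ (-θ) ≤ A n ^ (-θ) * (8:ℝ)⁻¹ ^ k := by
    intro n k
    induction k with
    | zero => simp
    | succ m ih =>
      calc A (n+(m+1)) ^ (-θ) = A ((n+m)+1) ^ (-θ) := by ring_nf
        _ ≤ (8:ℝ)⁻¹ * A (n+m) ^ (-θ) := hratio _
        _ ≤ (8:ℝ)⁻¹ * (A n ^ (-θ) * (8:ℝ)⁻¹ ^ m) := by nlinarith
        _ = A n ^ (-θ) * (8:ℝ)⁻¹ ^ (m+1) := by ring
  have hStail : ∀ n, S n ≤ 2 * A n ^ (-θ) := by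
    intro n
    have hgs : Summable (fun k : ℕ => A n ^ (-θ) * (8:ℝ)⁻¹ ^ k) :=
      (summable_geometric_of_lt_one (by norm_num) (by norm_num)).mul_left _
    have h1 : S n ≤ ∑' k : ℕ, A n ^ (-θ) * (8:ℝ)⁻¹ ^ k := by
      rw [hS]; exact Summable.tsum_le_tsum (hgeo2 n) (hsum' n) hgs
    have h2 : ∑' k : ℕ, A n ^ (-θ) * (8:ℝ)⁻¹ ^ k = A n ^ (-θ) * (8/7) := by
      rw [tsum_mul_left, tsum_geometric_of_lt_one (by norm_num) (by norm_num)]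
      norm_num
    have h4 : (0:ℝ) ≤ A n ^ (-θ) := Real.rpow_nonneg (hApos n).le _
    nlinarith
  have hAm1 : ∀ n, A n ^ (-θ-1) = A n ^ (-θ) / A n := fun n => by
    rw [show -θ-1 = -θ + (-1) by ring, Real.rpow_add (hApos n), Real.rpow_neg_one,
      div_eq_mul_inv]
  have hSub : ∀ n, S (n+1) ≤ A (n+1) ^ (-θ) * (1 + 2 / A (n+1)) := by
    intro n
    have h1 := hSrec (n+1)
    have h2 := hStail (n+2)
    have h3 : A (n+2) ^ (-θ) = A (n+1) ^ (-θ) / A (n+1) := by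
      rw [← hkey (n+1), hAm1]
    rw [h3] at h2
    have h4 : S (n+1+1) = S (n+2) := by norm_num
    rw [h4] at h1
    have e : A (n+1)^(-θ) * (1 + 2/A (n+1)) = A (n+1)^(-θ) + 2*(A (n+1)^(-θ)/A (n+1)) := by
      ring
    rw [e]
    linarith [h1, h2]
  -- C positivity
  have hCS : C = (S 0)⁻¹ := by
    rw [hC, hS]
    congr 1
    exact tsum_congr fun i => by rw [zero_add]
  have hCpos : 0 < C := by rw [hCS]; exact inv_pos.2 (hSpos 0)
  have hspos : ∀ n, 0 < A n ^ (-θ - 1) := fun n => Real.rpow_pos_of_pos (hApos n) _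
  have hsA : ∀ n, A n ^ (-θ-1) * A n = A n ^ (-θ) := fun n => by
    rw [hAm1, div_mul_cancel₀ _ (hApos n).ne']
  have hsS : ∀ n, A n ^ (-θ-1) ≤ S (n+1) := fun n => by
    rw [hkey]; exact hSge (n+1)
  -- locating x
  have hloc : ∀ x : ℝ, A 0 ≤ x → ∃ n, A n ≤ x ∧ x < A (n+1) := by
    intro x hx
    have hex : ∃ m, x < A m := (hAtop.eventually (eventually_gt_atTop x)).exists
    have hk : x < A (Nat.find hex) := Nat.find_spec hex
    have hk0 : Nat.find hex ≠ 0 := by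
      intro h
      rw [h] at hk
      linarith
    obtain ⟨n, hn⟩ := Nat.exists_eq_succ_of_ne_zero hk0
    rw [hn] at hk
    refine ⟨n, not_lt.1 ?_, hk⟩
    exact Nat.find_min hex (by omega)
  -- positivity of T
  have hTpos : ∀ x, 0 < T x := by
    intro x
    by_cases hx : x < A 0
    · rw [hT1 x hx]; norm_num
    push_neg at hx
    obtain ⟨n, hn1, hn2⟩ := hloc x hx
    by_cases h2 : x < 2 * A n
    · rw [hT2 n x hn1 h2]
      have h3 : A n ^ (-θ-1) * (x - A n) ≤ A n ^ (-θ-1) * A n := by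
        apply mul_le_mul_of_nonneg_left (by linarith) (hspos n).le
      rw [hsA] at h3
      have h4 := hSrec n
      have h5 := hSpos (n+1)
      nlinarith
    · push_neg at h2
      rw [hT3 n x h2 hn2]
      exact mul_pos hCpos (hSpos (n+1))
  -- main upper bound
  have hmain : ∀ t : ℝ, 0 < t → ∀ n : ℕ, 1 ≤ n → 2*t ≤ A n → 1 + t ≤ A n →
      ∀ x : ℝ, A n ≤ x → x < A (n+1) → T (x-t) ≤ (1+t) * T x := by
    intro t ht n hn1 hn2 hn3 x hx1 hx2
    obtain ⟨s, hsdef⟩ : ∃ s', A n ^ (-θ - 1) = s' := ⟨_, rfl⟩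
    have hs : 0 < s := hsdef ▸ hspos n
    have hApn := hApos n
    have hsrec := hSrec n
    have hsAn : s * A n = A n ^ (-θ) := by rw [← hsdef]; exact hsA n
    have hsSn : s ≤ S (n+1) := hsdef ▸ hsS n
    by_cases hb1 : x < 2 * A n
    · have hTx : T x = C * (S n - s * (x - A n)) := by
        rw [hT2 n x hx1 hb1, hsdef]
      have hD : S (n+1) ≤ S n - s * (x - A n) := by
        have : s * (x - A n) ≤ s * A n := mul_le_mul_of_nonneg_left (by linarith) hs.le
        rw [hsAn] at this
        linarith
      by_cases hb2 : A n ≤ x - t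
      · have hTxt : T (x-t) = C * (S n - s * (x - t - A n)) := by
          rw [hT2 n (x-t) hb2 (by linarith), hsdef]
        have hinner : S n - s * (x - t - A n) ≤ (1+t) * (S n - s * (x - A n)) := by
          nlinarith [mul_le_mul_of_nonneg_left (hsSn.trans hD) ht.le]
        calc T (x-t) = C * (S n - s * (x - t - A n)) := hTxt
          _ ≤ C * ((1+t) * (S n - s * (x - A n))) :=
              mul_le_mul_of_nonneg_left hinner hCpos.le
          _ = (1+t) * (C * (S n - s * (x - A n))) := by ring
          _ = (1+t) * T x := by rw [hTx]
      · push_neg at hb2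
        obtain ⟨m, rfl⟩ : ∃ m, n = m + 1 := ⟨n-1, by omega⟩
        have h8m := h8 m
        have hAmp := hApos m
        have hTxt : T (x-t) = C * S (m+1) := by
          apply hT3 m (x-t) (by linarith) (by simpa using hb2)
        have hxA : x - A (m+1) < t := by linarith
        have h1t : (1+t) * s ≤ S (m+1) := by
          have h2 : (1+t) * s ≤ A (m+1) * s := mul_le_mul_of_nonneg_right hn3 hs.le
          rw [mul_comm (A (m+1)) s, hsAn] at h2
          exact h2.trans (hSge _)
        have hinner : S (m+1) ≤ (1+t) * (S (m+1) - s * (x - A (m+1))) :=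
          stmt18_aux1 t s (S (m+1)) (x - A (m+1)) ht hxA.le hs.le h1t
        calc T (x-t) = C * S (m+1) := hTxt
          _ ≤ C * ((1+t) * (S (m+1) - s * (x - A (m+1)))) :=
              mul_le_mul_of_nonneg_left hinner hCpos.le
          _ = (1+t) * (C * (S (m+1) - s * (x - A (m+1)))) := by ring
          _ = (1+t) * T x := by rw [hTx]
    · push_neg at hb1
      have hTx : T x = C * S (n+1) := hT3 n x hb1 hx2
      by_cases hb2 : 2 * A n ≤ x - t
      · have hTxt : T (x-t) = C * S (n+1) := hT3 n (x-t) hb2 (by linarith)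
        rw [hTx, hTxt]
        exact (le_mul_iff_one_le_left (mul_pos hCpos (hSpos (n+1)))).2 (by linarith)
      · push_neg at hb2
        have hxt1 : A n ≤ x - t := by linarith
        have hTxt : T (x-t) = C * (S n - s * (x - t - A n)) := by
          rw [hT2 n (x-t) hxt1 hb2, hsdef]
        have hinner : S n - s * (x - t - A n) ≤ (1+t) * S (n+1) :=
          stmt18_aux2 t s (S n) (S (n+1)) (A n ^ (-θ)) (A n) (x - t - A n)
            (by linarith) hs.le ht.le hsAn hsrec hsSn
        calc T (x-t) = C * (S n - s * (x - t - A n)) := hTxt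
          _ ≤ C * ((1+t) * S (n+1)) := mul_le_mul_of_nonneg_left hinner hCpos.le
          _ = (1+t) * (C * S (n+1)) := by ring
          _ = (1+t) * T x := by rw [hTx]
  -- eventual ratio bound
  have hub : ∀ t : ℝ, 0 < t → ∀ᶠ x in atTop, T (x-t) / T x ≤ 1 + t := by
    intro t ht
    obtain ⟨N, hN⟩ := eventually_atTop.1 (hAtop.eventually (eventually_ge_atTop (max (2*t) (1+t))))
    have hNcond : max (2*t) (1+t) ≤ A (N+1) := hN (N+1) (by omega)
    filter_upwards [eventually_ge_atTop (A (N+1))] with x hx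
    obtain ⟨n, hn1, hn2⟩ := hloc x (le_trans (hAmono.monotone (Nat.zero_le _)) hx)
    have hnN : N + 1 ≤ n := by
      by_contra h
      push_neg at h
      have : A (n+1) ≤ A (N+1) := hAmono.monotone (by omega)
      linarith
    have hcond : max (2*t) (1+t) ≤ A n := hNcond.trans (hAmono.monotone hnN)
    rw [div_le_iff₀ (hTpos x)]
    exact hmain t ht n (by omega) ((le_max_left _ _).trans hcond)
      ((le_max_right _ _).trans hcond) x hn1 hn2
  -- value along the sequence 2 * A n
  have hlowval : ∀ t : ℝ, 0 < t → ∀ n : ℕ, t ≤ A n →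
      T (2*A n - t) / T (2*A n) = 1 + t * (A (n+1) ^ (-θ) / S (n+1)) := by
    intro t ht n htn
    have h8n := h8 n
    have hApn := hApos n
    have hT2v : T (2*A n - t) = C * (S n - A n ^ (-θ-1) * (2*A n - t - A n)) :=
      hT2 n _ (by linarith) (by linarith)
    have hT3v : T (2*A n) = C * S (n+1) := hT3 n _ le_rfl (by linarith)
    rw [hT2v, hT3v]
    have he : S n - A n ^ (-θ-1) * (2*A n - t - A n) = S (n+1) + A (n+1) ^ (-θ) * t := by
      have h1 := hsA n
      have h2 := hSrec n
      have h3 := hkey n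
      linear_combination h2 - h1 + t * h3
    rw [he, ← hkey n]
    have hSp := hSpos (n+1)
    field_simp
  -- the limit along the sequence
  have hlowlim : ∀ t : ℝ, 0 < t →
      Tendsto (fun n => 1 + t * (A (n+1) ^ (-θ) / S (n+1))) atTop (𝓝 (1+t)) := by
    intro t ht
    have hA1top : Tendsto (fun n => A (n+1)) atTop atTop :=
      hAtop.comp (tendsto_add_atTop_nat 1)
    have hup : Tendsto (fun n => 1 + 2 / A (n+1)) atTop (𝓝 1) := by
      have := Tendsto.div_atTop (tendsto_const_nhds (x := (2:ℝ))) hA1top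
      simpa using tendsto_const_nhds.add this
    have hq : Tendsto (fun n => S (n+1) / A (n+1) ^ (-θ)) atTop (𝓝 1) := by
      apply tendsto_of_tendsto_of_tendsto_of_le_of_le tendsto_const_nhds hup
      · intro n
        rw [le_div_iff₀ (Real.rpow_pos_of_pos (hApos (n+1)) _)]
        simpa using hSge (n+1)
      · intro n
        rw [div_le_iff₀ (Real.rpow_pos_of_pos (hApos (n+1)) _)]
        calc S (n+1) ≤ A (n+1) ^ (-θ) * (1 + 2 / A (n+1)) := hSub n
          _ = (1 + 2 / A (n+1)) * A (n+1) ^ (-θ) := by ring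
    have hqi : Tendsto (fun n => A (n+1) ^ (-θ) / S (n+1)) atTop (𝓝 1) := by
      have := hq.inv₀ one_ne_zero
      simp only [inv_div, inv_one] at this
      exact this
    have := tendsto_const_nhds (x := (1:ℝ)) |>.add ((tendsto_const_nhds (x := t)).mul hqi)
    simpa using this
  -- limsup computation
  have hCstar : ∀ t : ℝ, 0 < t → Cstar T t = 1 + t := by
    intro t ht
    have hubt := hub t ht
    have hbd : IsBoundedUnder (· ≤ ·) atTop (fun x => T (x-t) / T x) :=
      ⟨1+t, by simpa using hubt⟩
    have hcb : IsCoboundedUnder (· ≤ ·) atTop (fun x => T (x-t) / T x) := by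
      apply isCoboundedUnder_le_of_eventually_le atTop (x := 0)
      filter_upwards with x
      exact (div_pos (hTpos _) (hTpos _)).le
    have hle : Cstar T t ≤ 1 + t := limsup_le_of_le hcb hubt
    have hge : 1 + t ≤ Cstar T t := by
      apply le_of_forall_sub_le
      intro ε hε
      apply le_limsup_of_frequently_le _ hbd
      have hu : Tendsto (fun n : ℕ => 2 * A n) atTop atTop :=
        hAtop.const_mul_atTop (by norm_num)
      have hev : ∀ᶠ n in atTop, 1+t-ε ≤ T (2*A n - t) / T (2*A n) := by
        have h1 : ∀ᶠ n in atTop, 1+t-ε < 1 + t * (A (n+1) ^ (-θ) / S (n+1)) :=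
          (hlowlim t ht).eventually (eventually_gt_nhds (by linarith))
        have h2 : ∀ᶠ n in atTop, t ≤ A n := hAtop.eventually (eventually_ge_atTop t)
        filter_upwards [h1, h2] with n hn1 hn2
        rw [hlowval t ht n hn2]
        linarith
      exact hu.frequently hev.frequently
    linarith
  refine ⟨fun t ht => hCstar t ht, ?_, ⟨hTpos, fun t ht => ⟨1+t, by simpa using hub t ht⟩⟩, ?_⟩
  · have heq : (fun t : ℝ => 1 + t) =ᶠ[𝓝[>] (0:ℝ)] (fun t => Cstar T t) := by
      filter_upwards [self_mem_nhdsWithin] with t ht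
      exact (hCstar t ht).symm
    have h2 : Tendsto (fun t : ℝ => 1 + t) (𝓝[>] (0:ℝ)) (𝓝 1) := by
      have h3 : Tendsto (fun t : ℝ => 1 + t) (𝓝 (0:ℝ)) (𝓝 1) := by
        simpa using ((continuous_id.tendsto (0:ℝ)).const_add (1:ℝ))
      exact h3.mono_left nhdsWithin_le_nhds
    exact h2.congr' heq
  · rintro ⟨-, h⟩
    have h1 : limsup (fun x => T (x - 1) / T x) atTop = 1 := (h 1 one_pos).limsup_eq
    have h2 := hCstar 1 one_pos
    unfold Cstar at h2
    rw [h1] at h2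
    norm_num at h2
end
end

section
/- Let θ∈(3/2,(√5+1)/2), r=(θ+1)/θ, and let a>1 satisfy a^r>8a. Set aₙ=a^{rⁿ} for integers n≥0 and C=(Σ_{i=0}^∞ aᵢ^{−θ})^{−1}, and let F₀ be the distribution with F̄₀(x)=1 for x<a₀ and, for each n≥0, F̄₀(x)=C·(Σ_{i=n}^∞ aᵢ^{−θ} − aₙ^{−θ−1}(x−aₙ)) for x∈[aₙ,2aₙ) and F̄₀(x)=C·Σ_{i=n+1}^∞ aᵢ^{−θ} for x∈[2aₙ,a_{n+1}). For γ>0 define the distribution F on [0,∞) by F̄(x)=e^{−γx}·F̄₀(x) for x≥0. Then C^*(F,t)=(1+t)e^{γt} for each t>0; consequently C^*(F,0)=1, F belongs to the generalized long-tailed class 𝒪ℒ, and F belongs to no class ℒ(β) with β≥0. -/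
open MeasureTheory ProbabilityTheory Filter Topology Asymptotics Set

noncomputable section

set_option maxHeartbeats 3200000 in
/-- with `F₀` as in Statement 18 and `γ > 0`, the distribution `F` with
tail `F̄(x) = e^{-γx} F̄₀(x)` on `[0,∞)` satisfies `C^*(F, t) = (1+t)e^{γt}` for each
`t > 0`; consequently `C^*(F,0) = 1`, `F ∈ 𝒪ℒ`, and `F ∉ ℒ(β)` for every `β ≥ 0`. -/
theorem stmt_19 (θ r a : ℝ)
    (hθ₁ : 3 / 2 < θ) (hθ₂ : θ < (Real.sqrt 5 + 1) / 2)
    (hr : r = (θ + 1) / θ) (ha : 1 < a) (har : a ^ r > 8 * a)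
    (A : ℕ → ℝ) (hA : ∀ n, A n = a ^ (r ^ n))
    (S : ℕ → ℝ) (hS : ∀ n, S n = ∑' i : ℕ, A (n + i) ^ (-θ))
    (C : ℝ) (hC : C = (∑' i : ℕ, A i ^ (-θ))⁻¹)
    (T : ℝ → ℝ)
    (hT1 : ∀ x, x < A 0 → T x = 1)
    (hT2 : ∀ n : ℕ, ∀ x, A n ≤ x → x < 2 * A n →
      T x = C * (S n - A n ^ (-θ - 1) * (x - A n)))
    (hT3 : ∀ n : ℕ, ∀ x, 2 * A n ≤ x → x < A (n + 1) → T x = C * S (n + 1))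
    (γ : ℝ) (hγ : 0 < γ)
    (Tγ : ℝ → ℝ)
    (hTγneg : ∀ x < (0:ℝ), Tγ x = 1)
    (hTγ : ∀ x ≥ (0:ℝ), Tγ x = Real.exp (-γ * x) * T x) :
    (∀ t > (0:ℝ), Cstar Tγ t = (1 + t) * Real.exp (γ * t)) ∧
    Tendsto (fun t => Cstar Tγ t) (𝓝[>] (0:ℝ)) (𝓝 1) ∧
    IsOL Tγ ∧ ∀ β ≥ (0:ℝ), ¬ IsLgamma β Tγ := by
  classical
  have hθ0 : 0 < θ := by linarith
  have ha0 : 0 < a := by linarith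
  have hr1 : 1 < r := by
    rw [hr, lt_div_iff₀ hθ0]; linarith
  have hA0 : A 0 = a := by rw [hA 0, pow_zero, Real.rpow_one]
  have hApos : ∀ n, 0 < A n := fun n => by rw [hA n]; positivity
  have hrn1 : ∀ n : ℕ, 1 ≤ r ^ n := fun n => one_le_pow₀ hr1.le
  have hA1 : ∀ n, a ≤ A n := by
    intro n
    rw [hA n]
    calc a = a ^ (1:ℝ) := (Real.rpow_one a).symm
    _ ≤ a ^ (r ^ n) := by
        rw [Real.rpow_le_rpow_left_iff ha]; exact hrn1 n
  -- growth : A (n+1) > 8 * A n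
  have ha8 : 8 < a ^ (r - 1) := by
    have h1 : a ^ (r - 1) = a ^ r / a := by
      rw [Real.rpow_sub ha0, Real.rpow_one]
    rw [h1, lt_div_iff₀ ha0]; linarith
  have hArec : ∀ n, A (n + 1) = A n ^ r := by
    intro n
    rw [hA, hA, pow_succ, Real.rpow_mul ha0.le]
  have hA8 : ∀ n, 8 * A n < A (n + 1) := by
    intro n
    have h1 : A (n + 1) = a ^ (r ^ n * (r - 1)) * A n := by
      rw [hA, hA, ← Real.rpow_add ha0]
      congr 1; ring
    have h2 : a ^ (r - 1) ≤ a ^ (r ^ n * (r - 1)) := by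
      rw [Real.rpow_le_rpow_left_iff ha]
      nlinarith [hrn1 n]
    calc 8 * A n < a ^ (r - 1) * A n := by
          have := hApos n; nlinarith
    _ ≤ a ^ (r ^ n * (r - 1)) * A n := by
          have := hApos n; nlinarith
    _ = A (n + 1) := h1.symm
  have hAmono : StrictMono A := strictMono_nat_of_lt_succ fun n =>
    lt_of_le_of_lt (by nlinarith [hApos n]) (hA8 n)
  have hAtop : Tendsto A atTop atTop := by
    have hAgrow : ∀ n, (8:ℝ) ^ n ≤ A n := by
      intro n
      induction n with
      | zero => simpa [hA0] using ha.le
      | succ k ih =>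
        calc (8:ℝ) ^ (k+1) = 8 * 8 ^ k := by ring
        _ ≤ 8 * A k := by linarith
        _ ≤ A (k+1) := (hA8 k).le
    exact tendsto_atTop_mono hAgrow (tendsto_pow_atTop_atTop_of_one_lt (by norm_num))
  -- the sequence b n = A n ^ (-θ)
  set b : ℕ → ℝ := fun n => A n ^ (-θ) with hb
  have hbpos : ∀ n, 0 < b n := fun n => Real.rpow_pos_of_pos (hApos n) _
  have hbkey : ∀ n, b (n + 1) = A n ^ (-θ - 1) := by
    intro n
    simp only [hb]
    rw [hArec n, ← Real.rpow_mul (hApos n).le]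
    congr 1
    rw [hr]
    field_simp
    ring
  have hbA : ∀ n, b (n + 1) * A n = b n := by
    intro n
    rw [hbkey n]
    nth_rewrite 2 [← Real.rpow_one (A n)]
    rw [← Real.rpow_add (hApos n)]
    simp only [hb]
    norm_num
  -- summability and S facts
  have h8θ : (8:ℝ) ^ (-θ) ≤ 1/2 := by
    have h1 : (8:ℝ) ^ (-θ) ≤ (8:ℝ) ^ (-1:ℝ) := by
      rw [Real.rpow_le_rpow_left_iff (by norm_num : (1:ℝ) < 8)]
      linarith
    rw [Real.rpow_neg_one] at h1
    linarith
  have h8θ0 : (0:ℝ) ≤ (8:ℝ) ^ (-θ) := (Real.rpow_pos_of_pos (by norm_num) _).le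
  have hb8 : ∀ n, b (n + 1) ≤ (8:ℝ) ^ (-θ) * b n := by
    intro n
    have h1 : b (n+1) ≤ (8 * A n) ^ (-θ) := by
      apply Real.rpow_le_rpow_of_nonpos (mul_pos (by norm_num) (hApos n)) (hA8 n).le (by linarith)
    calc b (n+1) ≤ (8 * A n) ^ (-θ) := h1
    _ = (8:ℝ) ^ (-θ) * b n := by
        rw [Real.mul_rpow (by norm_num) (hApos n).le]
  have hbgeo : ∀ n k, b (n + k) ≤ ((8:ℝ) ^ (-θ)) ^ k * b n := by
    intro n k
    induction k with
    | zero => simp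
    | succ m ih =>
      calc b (n + (m+1)) = b ((n + m) + 1) := by ring_nf
      _ ≤ (8:ℝ) ^ (-θ) * b (n + m) := hb8 _
      _ ≤ (8:ℝ) ^ (-θ) * (((8:ℝ) ^ (-θ)) ^ m * b n) := by
          apply mul_le_mul_of_nonneg_left ih h8θ0
      _ = ((8:ℝ) ^ (-θ)) ^ (m+1) * b n := by ring
  have hgeo_sum : Summable (fun k : ℕ => ((8:ℝ) ^ (-θ)) ^ k) :=
    summable_geometric_of_lt_one h8θ0 (by linarith)
  have hbsum : ∀ n, Summable (fun k : ℕ => b (n + k)) := by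
    intro n
    apply Summable.of_nonneg_of_le (fun k => (hbpos _).le) (hbgeo n) (hgeo_sum.mul_right _)
  have hSb : ∀ n, S n = ∑' k : ℕ, b (n + k) := fun n => hS n
  have hbleS : ∀ n, b n ≤ S n := by
    intro n
    rw [hSb n]
    have := Summable.le_tsum (hbsum n) 0 (fun j _ => (hbpos _).le)
    simpa using this
  have hSpos : ∀ n, 0 < S n := fun n => lt_of_lt_of_le (hbpos n) (hbleS n)
  have hSrec : ∀ n, S n = b n + S (n + 1) := by
    intro n
    rw [hSb n, Summable.tsum_eq_zero_add (hbsum n), hSb (n+1)]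
    simp only [Nat.add_zero]
    congr 1
    apply tsum_congr
    intro k
    congr 1
    omega
  have hSgeo : ∀ n, S n ≤ 2 * b n := by
    intro n
    rw [hSb n]
    have h1 : ∑' k : ℕ, b (n + k) ≤ ∑' k : ℕ, ((8:ℝ) ^ (-θ)) ^ k * b n :=
      Summable.tsum_le_tsum (hbgeo n) (hbsum n) (hgeo_sum.mul_right _)
    have h2 : ∑' k : ℕ, ((8:ℝ) ^ (-θ)) ^ k * b n = (1 - (8:ℝ) ^ (-θ))⁻¹ * b n := by
      rw [tsum_mul_right, tsum_geometric_of_lt_one h8θ0 (by linarith)]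
    have h3 : (1 - (8:ℝ) ^ (-θ))⁻¹ ≤ 2 := by
      rw [inv_le_comm₀ (by linarith) (by norm_num)]
      linarith
    calc ∑' k : ℕ, b (n + k) ≤ (1 - (8:ℝ) ^ (-θ))⁻¹ * b n := by rw [← h2]; exact h1
    _ ≤ 2 * b n := mul_le_mul_of_nonneg_right h3 (hbpos n).le
  have hCS : C = (S 0)⁻¹ := by
    rw [hC, hSb 0]
    congr 1
    apply tsum_congr; intro k; simp [hb]
  have hCpos : 0 < C := by rw [hCS]; exact inv_pos.2 (hSpos 0)
  -- the max formula for T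
  have hTmax : ∀ n x, A n ≤ x → x < A (n + 1) →
      T x = C * max (S (n + 1)) (S n - b (n + 1) * (x - A n)) := by
    intro n x hx1 hx2
    rcases lt_or_ge x (2 * A n) with h | h
    · rw [hT2 n x hx1 h, ← hbkey n]
      congr 1
      rw [max_eq_right]
      have h1 : b (n+1) * (x - A n) ≤ b (n+1) * A n :=
        mul_le_mul_of_nonneg_left (by linarith) (hbpos _).le
      rw [hbA n] at h1
      have := hSrec n
      linarith
    · rw [hT3 n x h hx2]
      congr 1
      rw [max_eq_left]
      have h1 : b (n+1) * A n ≤ b (n+1) * (x - A n) :=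
        mul_le_mul_of_nonneg_left (by linarith) (hbpos _).le
      rw [hbA n] at h1
      have := hSrec n
      linarith
  -- locating x in an interval
  have hTexists : ∀ x, A 0 ≤ x → ∃ n, A n ≤ x ∧ x < A (n + 1) := by
    intro x hx
    have hex : ∃ m, x < A m := (hAtop.eventually_gt_atTop x).exists
    have hm : x < A (Nat.find hex) := Nat.find_spec hex
    have hm0 : Nat.find hex ≠ 0 := by
      intro h
      rw [h] at hm
      exact absurd hm (not_lt.2 hx)
    obtain ⟨n, hn⟩ := Nat.exists_eq_succ_of_ne_zero hm0
    refine ⟨n, ?_, by rw [← Nat.succ_eq_add_one, ← hn]; exact hm⟩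
    have := Nat.find_min hex (m := n) (by omega)
    exact not_lt.1 this
  have hTpos : ∀ x, 0 < T x := by
    intro x
    rcases lt_or_ge x (A 0) with h | h
    · rw [hT1 x h]; norm_num
    · obtain ⟨n, hn1, hn2⟩ := hTexists x h
      rw [hTmax n x hn1 hn2]
      exact mul_pos hCpos (lt_of_lt_of_le (hSpos (n+1)) (le_max_left _ _))
  -- Lipschitz and monotone on each interval
  have hTlip : ∀ n x y, A n ≤ x → x ≤ y → y < A (n + 1) →
      T y ≤ T x ∧ T x ≤ T y + C * b (n + 1) * (y - x) := by
    intro n x y hx hxy hy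
    rw [hTmax n x hx (lt_of_le_of_lt hxy hy), hTmax n y (le_trans hx hxy) hy]
    constructor
    · apply mul_le_mul_of_nonneg_left _ hCpos.le
      apply max_le_max le_rfl
      nlinarith [hbpos (n+1)]
    · have h1 : max (S (n+1)) (S n - b (n+1) * (x - A n)) ≤
          max (S (n+1)) (S n - b (n+1) * (y - A n)) + b (n+1) * (y - x) := by
        apply max_le
        · calc S (n+1) ≤ max (S (n+1)) (S n - b (n+1) * (y - A n)) := le_max_left _ _
          _ ≤ _ := by nlinarith [hbpos (n+1)]
        · calc S n - b (n+1) * (x - A n)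
              = (S n - b (n+1) * (y - A n)) + b (n+1) * (y - x) := by ring
          _ ≤ _ := by
              have := le_max_right (S (n+1)) (S n - b (n+1) * (y - A n))
              linarith
      nlinarith
  -- main upper bound : eventually T (x - t) ≤ (1 + t) * T x
  have hUB : ∀ t : ℝ, 0 < t → ∃ N : ℕ, ∀ x, A (N + 1) ≤ x → T (x - t) ≤ (1 + t) * T x := by
    intro t ht
    obtain ⟨N, hN⟩ := Filter.eventually_atTop.1 (hAtop.eventually_ge_atTop (max t (1 + t)))
    refine ⟨N, fun x hx => ?_⟩
    obtain ⟨n, hn1, hn2⟩ := hTexists x (le_trans (hAmono.le_iff_le.2 (Nat.zero_le _)) hx)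
    have hNn : N + 1 ≤ n := by
      by_contra hcon
      push_neg at hcon
      have h1 : A (n + 1) ≤ A (N + 1) := hAmono.le_iff_le.2 (by omega)
      linarith
    obtain ⟨m, rfl⟩ : ∃ m, n = m + 1 := ⟨n - 1, by omega⟩
    have htm : t ≤ A m := le_trans (le_max_left _ _) (hN m (by omega))
    have h1t : 1 + t ≤ A (m + 1) := le_trans (le_max_right _ _) (hN (m + 1) (by omega))
    rcases le_or_gt (A (m + 1)) (x - t) with hcase | hcase
    · -- both points in the same linearity interval
      obtain ⟨hmono, hlip⟩ := hTlip (m + 1) (x - t) x hcase (by linarith) hn2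
      have hxt : x - (x - t) = t := by ring
      rw [hxt] at hlip
      have hTx : C * b (m + 2) ≤ T x := by
        rw [hTmax (m + 1) x hn1 hn2]
        have h2 : b (m + 2) ≤ max (S (m + 2)) (S (m + 1) - b (m + 2) * (x - A (m + 1))) :=
          le_trans (hbleS (m + 2)) (le_max_left _ _)
        have h3 : C * b (m + 2) ≤
            C * max (S (m + 2)) (S (m + 1) - b (m + 2) * (x - A (m + 1))) :=
          mul_le_mul_of_nonneg_left h2 hCpos.le
        exact h3
      have h4 : C * b (m + 2) * t ≤ T x * t :=
        mul_le_mul_of_nonneg_right hTx ht.le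
      nlinarith [h4, hlip]
    · -- x - t lies in the flat part of the previous interval
      have hflat : T (x - t) = C * S (m + 1) := by
        apply hT3 m (x - t) _ hcase
        nlinarith [hApos m, hA8 m]
      have hTx : C * (S (m + 1) - b (m + 2) * t) ≤ T x := by
        rw [hTmax (m + 1) x hn1 hn2]
        have h2 : S (m + 1) - b (m + 2) * t ≤ S (m + 1) - b (m + 2) * (x - A (m + 1)) := by
          nlinarith [hbpos (m + 2)]
        have h3 := le_max_right (S (m + 2)) (S (m + 1) - b (m + 2) * (x - A (m + 1)))
        nlinarith
      have h4 : (1 + t) * b (m + 2) ≤ S (m + 1) := by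
        have h5 : b (m + 2) * A (m + 1) = b (m + 1) := hbA (m + 1)
        have h6 := hbleS (m + 1)
        nlinarith [hbpos (m + 2)]
      have h7 : C * S (m + 1) ≤ (1 + t) * (C * (S (m + 1) - b (m + 2) * t)) := by
        nlinarith [hCpos.le, mul_le_mul_of_nonneg_left h4 (mul_nonneg hCpos.le ht.le)]
      rw [hflat]
      nlinarith [mul_le_mul_of_nonneg_left hTx (by linarith : (0:ℝ) ≤ 1 + t)]
  -- expressing the ratio of Tγ via the ratio of T
  have hratio : ∀ t : ℝ, 0 < t → ∀ x, t ≤ x →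
      Tγ (x - t) / Tγ x = Real.exp (γ * t) * (T (x - t) / T x) := by
    intro t ht x hx
    rw [hTγ (x - t) (by linarith), hTγ x (by linarith)]
    have he : Real.exp (-γ * (x - t)) = Real.exp (γ * t) * Real.exp (-γ * x) := by
      rw [← Real.exp_add]; congr 1; ring
    rw [he]
    field_simp [Real.exp_ne_zero, (hTpos x).ne']
  -- the eventual upper bound for the ratio of Tγ
  have hubγ : ∀ t : ℝ, 0 < t →
      ∀ᶠ x in atTop, Tγ (x - t) / Tγ x ≤ (1 + t) * Real.exp (γ * t) := by
    intro t ht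
    obtain ⟨N, hUBN⟩ := hUB t ht
    filter_upwards [eventually_ge_atTop (A (N + 1)), eventually_ge_atTop t] with x hx1 hx2
    rw [hratio t ht x hx2, mul_comm ((1:ℝ) + t) _]
    apply mul_le_mul_of_nonneg_left _ (Real.exp_pos _).le
    rw [div_le_iff₀ (hTpos x)]
    exact hUBN x hx1
  -- limsup computation
  have hCstar : ∀ t : ℝ, 0 < t → Cstar Tγ t = (1 + t) * Real.exp (γ * t) := by
    intro t ht
    have hub := hubγ t ht
    have hbound : IsBoundedUnder (· ≤ ·) atTop (fun x => Tγ (x - t) / Tγ x) :=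
      isBoundedUnder_of_eventually_le hub
    -- convergence of the sequence of values at 2 * A n
    have hq : Tendsto (fun n => b (n + 1) / S (n + 1)) atTop (𝓝 1) := by
      have hSdiv : Tendsto (fun n => S (n + 1) / b (n + 1)) atTop (𝓝 1) := by
        apply tendsto_of_tendsto_of_tendsto_of_le_of_le (g := fun _ => (1:ℝ))
          (h := fun n => 1 + 2 / A (n + 1)) tendsto_const_nhds
        · have h2 : Tendsto (fun n : ℕ => 2 / A (n + 1)) atTop (𝓝 0) :=
            tendsto_const_nhds.div_atTop (hAtop.comp (tendsto_add_atTop_nat 1))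
          simpa using tendsto_const_nhds.add h2
        · intro n
          rw [le_div_iff₀ (hbpos (n + 1))]
          simpa using hbleS (n + 1)
        · intro n
          rw [div_le_iff₀ (hbpos (n + 1))]
          have h5 : b (n + 2) * A (n + 1) = b (n + 1) := hbA (n + 1)
          have h6 := hSgeo (n + 2)
          have h7 := hSrec (n + 1)
          have h8 : (1 + 2 / A (n + 1)) * b (n + 1) = b (n + 1) + 2 * b (n + 2) := by
            have hAne : A (n + 1) ≠ 0 := (hApos (n + 1)).ne'
            field_simp
            nlinarith [h5]
          linarith
      have h9 := hSdiv.inv₀ one_ne_zero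
      simp only [inv_one] at h9
      exact h9.congr fun n => inv_div _ _
    have hu : Tendsto (fun n => Real.exp (γ * t) * (1 + t * (b (n + 1) / S (n + 1)))) atTop
        (𝓝 ((1 + t) * Real.exp (γ * t))) := by
      have h1 : Tendsto (fun n => 1 + t * (b (n + 1) / S (n + 1))) atTop (𝓝 (1 + t * 1)) :=
        tendsto_const_nhds.add (tendsto_const_nhds.mul hq)
      have h2 := tendsto_const_nhds.mul h1 (f := fun _ : ℕ => Real.exp (γ * t))
      convert h2 using 2
      ring
    have hval : ∀ᶠ n in atTop, Tγ (2 * A n - t) / Tγ (2 * A n) =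
        Real.exp (γ * t) * (1 + t * (b (n + 1) / S (n + 1))) := by
      filter_upwards [hAtop.eventually_ge_atTop t] with n h1
      have hT2An : T (2 * A n) = C * S (n + 1) :=
        hT3 n (2 * A n) le_rfl (by nlinarith [hA8 n, hApos n])
      have hTA : T (2 * A n - t) = C * (S (n + 1) + b (n + 1) * t) := by
        rw [hT2 n (2 * A n - t) (by linarith) (by linarith), ← hbkey n]
        congr 1
        have h5 := hbA n
        have h6 := hSrec n
        nlinarith
      rw [hratio t ht (2 * A n) (by nlinarith [hApos n]), hTA, hT2An,
        mul_div_mul_left _ _ hCpos.ne']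
      congr 1
      field_simp [(hSpos (n + 1)).ne']
    apply le_antisymm
    · apply limsup_le_of_le _ hub
      apply IsCoboundedUnder.of_frequently_ge (a := 0)
      apply Eventually.frequently
      filter_upwards [eventually_ge_atTop t] with x hx
      have h1 : 0 < Tγ (x - t) := by
        rcases lt_or_ge (x - t) 0 with h | h
        · rw [hTγneg _ h]; norm_num
        · rw [hTγ _ h]; exact mul_pos (Real.exp_pos _) (hTpos _)
      have h2 : 0 < Tγ x := by
        rcases lt_or_ge x 0 with h | h
        · rw [hTγneg _ h]; norm_num
        · rw [hTγ _ h]; exact mul_pos (Real.exp_pos _) (hTpos _)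
      positivity
    · by_contra hlt
      push_neg at hlt
      obtain ⟨c, hc1, hc2⟩ := exists_between hlt
      have hfreq : ∃ᶠ x in atTop, c ≤ Tγ (x - t) / Tγ x := by
        rw [frequently_atTop]
        intro x0
        obtain ⟨n, h1, h2, h3⟩ :=
          ((hu.eventually (eventually_gt_nhds hc2)).and
            (hval.and (hAtop.eventually_ge_atTop (max x0 0)))).exists
        refine ⟨2 * A n, ?_, by rw [h2]; exact h1.le⟩
        have := le_max_left x0 0
        have := le_max_right x0 0
        nlinarith [hApos n]
      have := le_limsup_of_frequently_le hfreq hbound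
      exact absurd this (not_le.2 hc1)
  -- positivity of Tγ
  have hTγpos : ∀ x, 0 < Tγ x := by
    intro x
    rcases lt_or_ge x 0 with h | h
    · rw [hTγneg x h]; norm_num
    · rw [hTγ x h]; exact mul_pos (Real.exp_pos _) (hTpos x)
  refine ⟨hCstar, ?_, ⟨hTγpos, fun t ht => isBoundedUnder_of_eventually_le (hubγ t ht)⟩, ?_⟩
  · have hcont : Tendsto (fun t : ℝ => (1 + t) * Real.exp (γ * t)) (𝓝 0) (𝓝 1) := by
      have h1 : ContinuousAt (fun t : ℝ => (1 + t) * Real.exp (γ * t)) 0 := by fun_prop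
      have h2 := h1.tendsto
      norm_num at h2
      exact h2
    apply Tendsto.congr' _ (hcont.mono_left nhdsWithin_le_nhds)
    filter_upwards [self_mem_nhdsWithin] with t ht
    exact (hCstar t ht).symm
  · intro β hβ hL
    obtain ⟨hpos, htend⟩ := hL
    have e1 : Cstar Tγ 1 = Real.exp (β * 1) := (htend 1).limsup_eq
    have e2 : Cstar Tγ 2 = Real.exp (β * 2) := (htend 2).limsup_eq
    rw [hCstar 1 one_pos] at e1
    rw [hCstar 2 two_pos] at e2
    have hsq : Real.exp (β * 2) = Real.exp (β * 1) * Real.exp (β * 1) := by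
      rw [← Real.exp_add]; ring_nf
    have hgsq : Real.exp (γ * 2) = Real.exp (γ * 1) * Real.exp (γ * 1) := by
      rw [← Real.exp_add]; ring_nf
    have e3 : Real.exp (β * 2) = 4 * (Real.exp (γ * 1) * Real.exp (γ * 1)) := by
      rw [hsq, ← e1]; ring
    rw [hgsq, e3] at e2
    nlinarith [mul_pos (Real.exp_pos (γ * 1)) (Real.exp_pos (γ * 1))]
end
end
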